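/- Assume the maximum setup: u, v : ℝ^d → ℝ are bounded Borel measurable, φ : [0,∞) → ℝ is C² with φ' ≥ 0 and φ'' ≤ 0, and ψ(x,y) := u(x) − v(y) − φ(‖x−y‖) attains a global maximum at (x̄, ȳ) with x̄ ≠ ȳ; set a := x̄ − ȳ, â := a/‖a‖ and p := φ'(‖a‖)·â. Let j : ℝ^d × ℝ^d → ℝ^d be any Borel function, set Δ(z) := j(x̄,z) − j(ȳ,z), let 𝒞 ⊆ ℝ^d be any Borel set, let 0 < δ < ‖a‖, and let μ be a nonnegative Borel measure on ℝ^d for which all integrands appearing below are integrable. Then ∫_{B \ 𝒞} (u(x̄+j(x̄,z)) − u(x̄) − ⟨p, j(x̄,z)⟩) dμ(z) − ∫_{B \ 𝒞} (v(ȳ+j(ȳ,z)) − v(ȳ) − ⟨p, j(ȳ,z)⟩) dμ(z) ≤ 2φ'(‖a‖) ∫_{{z ∈ B \ 𝒞 : ‖Δ(z)‖ ≥ δ}} ‖Δ(z)‖ dμ(z) + ∫_{{z ∈ B \ 𝒞 : ‖Δ(z)‖ ≤ δ}} sup_{s∈[−1,1]} ( φ'(‖a+sΔ(z)‖)/‖a+sΔ(z)‖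 ) ‖Δ(z)‖² dμ(z). -/

import Mathlib

/-!
Write `K(z)` for the difference of the two integrands and `R(w) := φ ‖a + w‖ - φ ‖a‖ - ⟪p, w⟫`
for the remainder of the first-order expansion of `x ↦ φ ‖x‖` at `a` (whose gradient is `p`).
Testing the maximality of `(x̄, ȳ)` at `(x̄ + j(x̄,z), ȳ + j(ȳ,z))` gives `K(z) ≤ R(Δ(z))`.
Concavity of `φ` on `[0, ∞)` bounds `φ ‖a + w‖ - φ ‖a‖` by `φ'(‖a‖) (‖a + w‖ - ‖a‖)`, whence
`R(w) ≤ 2 φ'(‖a‖) ‖w‖` always, and, when `‖w‖ < ‖a‖`, the elementary inequality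
`(‖a + w‖ - ‖a‖ - ⟪â, w⟫) ‖a + w‖ ≤ ‖w‖²` gives `R(w) ≤ φ'(‖a‖) ‖w‖² / ‖a + w‖`. The last
factor `φ'(‖a‖) / ‖a + w‖` is at most the value of `s ↦ φ'(‖a + s w‖) / ‖a + s w‖` at `s = 0`
or at `s = 1`, according as `‖a‖ ≤ ‖a + w‖` or not, since `φ'` is nonnegative and antitone.
Integrating the first bound where `‖Δ‖ ≥ δ` and the second one on the rest of `B \ 𝒞` proves
the estimate.
-/

open MeasureTheory RealInnerProductSpace Set

theorem ConcaveOn.le_add_deriv_mul_sub {S : Set ℝ} {f : ℝ → ℝ} {x y : ℝ}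
    (hfc : ConcaveOn ℝ S f) (hx : x ∈ S) (hy : y ∈ S) (hfd : DifferentiableAt ℝ f x) :
    f y ≤ f x + deriv f x * (y - x) := by
  rcases lt_trichotomy x y with hxy | rfl | hxy
  · have h := hfc.slope_le_deriv hx hy hxy hfd
    rw [slope_def_field, div_le_iff₀ (sub_pos.2 hxy)] at h
    linarith
  · simp
  · have h := hfc.deriv_le_slope hy hx hxy hfd
    rw [slope_def_field, le_div_iff₀ (sub_pos.2 hxy)] at h
    linarith

theorem ContDiff.concaveOn_Ici_zero {φ : ℝ → ℝ} (hφ : ContDiff ℝ 2 φ)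
    (hφ'' : ∀ t : ℝ, 0 ≤ t → deriv (deriv φ) t ≤ 0) : ConcaveOn ℝ (Ici 0) φ := by
  have hφ' : Differentiable ℝ (deriv φ) := by
    simpa using hφ.differentiable_iteratedDeriv 1 (by norm_num)
  refine concaveOn_of_deriv2_nonpos (convex_Ici 0) hφ.continuous.continuousOn
    (hφ.differentiable two_ne_zero).differentiableOn hφ'.differentiableOn fun t ht => ?_
  rw [interior_Ici] at ht
  simpa using hφ'' t (le_of_lt ht)

theorem setIntegral_le_setIntegral_add_setIntegral {α : Type*} [MeasurableSpace α]
    {μ : Measure α} {S T U : Set α} {f h₁ h₂ : α → ℝ}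
    (hS : MeasurableSet S) (hT : MeasurableSet T) (hTS : T ⊆ S) (hSTU : S \ T ⊆ U)
    (hf : IntegrableOn f S μ) (hh₁ : IntegrableOn h₁ T μ) (hh₂ : IntegrableOn h₂ U μ)
    (hh₂_nonneg : ∀ x, 0 ≤ h₂ x)
    (hfT : ∀ x ∈ T, f x ≤ h₁ x) (hfST : ∀ x ∈ S \ T, f x ≤ h₂ x) :
    ∫ x in S, f x ∂μ ≤ ∫ x in T, h₁ x ∂μ + ∫ x in U, h₂ x ∂μ := by
  have hsplit : ∫ x in S, f x ∂μ = ∫ x in T, f x ∂μ + ∫ x in S \ T, f x ∂μ := by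
    rw [setIntegral_sdiff hT hf hTS]; ring
  have hon_T : ∫ x in T, f x ∂μ ≤ ∫ x in T, h₁ x ∂μ :=
    setIntegral_mono_on (hf.mono_set hTS) hh₁ hT hfT
  have hon_ST : ∫ x in S \ T, f x ∂μ ≤ ∫ x in S \ T, h₂ x ∂μ :=
    setIntegral_mono_on (hf.mono_set sdiff_subset) (hh₂.mono_set hSTU) (hS.diff hT) hfST
  have hST_U : ∫ x in S \ T, h₂ x ∂μ ≤ ∫ x in U, h₂ x ∂μ :=
    setIntegral_mono_set hh₂ (ae_of_all _ hh₂_nonneg) hSTU.eventuallyLE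
  linarith

section NormProfile

variable {E : Type*} [NormedAddCommGroup E] [InnerProductSpace ℝ E]

theorem abs_inv_norm_mul_inner_le (a w : E) : |‖a‖⁻¹ * ⟪a, w⟫| ≤ ‖w‖ := by
  rcases eq_or_ne a 0 with rfl | ha
  · simp
  rw [abs_mul, abs_inv, abs_norm, inv_mul_le_iff₀ (norm_pos_iff.2 ha)]
  exact abs_real_inner_le_norm a w

theorem norm_add_sub_norm_sub_inner_mul_norm_add_le {a w : E} (h : ‖w‖ ≤ ‖a‖) :
    (‖a + w‖ - ‖a‖ - ‖a‖⁻¹ * ⟪a, w⟫) * ‖a + w‖ ≤ ‖w‖ ^ 2 := by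
  set q := ‖a‖⁻¹ * ⟪a, w⟫
  have hq := abs_le.1 (abs_inv_norm_mul_inner_le a w)
  have hsq : ‖a + w‖ ^ 2 = (‖a‖ + q) ^ 2 + ‖w‖ ^ 2 - q ^ 2 := by
    rcases eq_or_ne a 0 with rfl | ha
    · simp [q]
    have hq' : ‖a‖ * q = ⟪a, w⟫ := by
      rw [← mul_assoc, mul_inv_cancel₀ (norm_ne_zero_iff.2 ha), one_mul]
    rw [norm_add_sq_real, ← hq']
    ring
  -- If `‖a‖ + q ≤ ‖a + w‖`, the left side is at most `‖a + w‖² - (‖a‖ + q)² ≤ ‖w‖²`;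
  -- otherwise it is nonpositive.
  rcases le_total (‖a‖ + q) ‖a + w‖ with hle | hle
  · nlinarith [norm_nonneg (a + w)]
  · nlinarith [norm_nonneg (a + w)]

theorem norm_add_smul_pos {a w : E} {s : ℝ} (hs : |s| ≤ 1) (h : ‖w‖ < ‖a‖) :
    0 < ‖a + s • w‖ := by
  have hsw : ‖s • w‖ ≤ ‖w‖ := by
    rw [norm_smul, Real.norm_eq_abs]
    exact mul_le_of_le_one_left (norm_nonneg w) hs
  have := norm_sub_norm_le a (-(s • w))
  rw [norm_neg, sub_neg_eq_add] at this
  linarith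

variable {φ : ℝ → ℝ}

theorem norm_profile_remainder_le_two_mul {a w : E} (hφ : ConcaveOn ℝ (Ici 0) φ)
    (hφd : DifferentiableAt ℝ φ ‖a‖) (hφ' : 0 ≤ deriv φ ‖a‖) :
    φ ‖a + w‖ - φ ‖a‖ - ⟪deriv φ ‖a‖ • (‖a‖⁻¹ • a), w⟫ ≤ 2 * deriv φ ‖a‖ * ‖w‖ := by
  have htan := hφ.le_add_deriv_mul_sub (norm_nonneg a) (norm_nonneg (a + w)) hφd
  have hnorm : deriv φ ‖a‖ * (‖a + w‖ - ‖a‖) ≤ deriv φ ‖a‖ * ‖w‖ :=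
    mul_le_mul_of_nonneg_left (by linarith [norm_add_le a w]) hφ'
  have hinner : -‖w‖ ≤ ‖a‖⁻¹ * ⟪a, w⟫ := (abs_le.1 (abs_inv_norm_mul_inner_le a w)).1
  rw [real_inner_smul_left, real_inner_smul_left]
  nlinarith

theorem norm_profile_remainder_le_div_mul_sq {a w : E} (hφ : ConcaveOn ℝ (Ici 0) φ)
    (hφd : DifferentiableAt ℝ φ ‖a‖) (hφ' : 0 ≤ deriv φ ‖a‖) (h : ‖w‖ < ‖a‖) :
    φ ‖a + w‖ - φ ‖a‖ - ⟪deriv φ ‖a‖ • (‖a‖⁻¹ • a), w⟫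
      ≤ deriv φ ‖a‖ / ‖a + w‖ * ‖w‖ ^ 2 := by
  have hpos : 0 < ‖a + w‖ := by simpa using norm_add_smul_pos (s := 1) (by simp) h
  have htan := hφ.le_add_deriv_mul_sub (norm_nonneg a) (norm_nonneg (a + w)) hφd
  have hgeom : ‖a + w‖ - ‖a‖ - ‖a‖⁻¹ * ⟪a, w⟫ ≤ ‖w‖ ^ 2 / ‖a + w‖ :=
    (le_div_iff₀ hpos).2 (norm_add_sub_norm_sub_inner_mul_norm_add_le h.le)
  calc φ ‖a + w‖ - φ ‖a‖ - ⟪deriv φ ‖a‖ • (‖a‖⁻¹ • a), w⟫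
      ≤ deriv φ ‖a‖ * (‖a + w‖ - ‖a‖ - ‖a‖⁻¹ * ⟪a, w⟫) := by
        rw [real_inner_smul_left, real_inner_smul_left]; linarith
    _ ≤ deriv φ ‖a‖ * (‖w‖ ^ 2 / ‖a + w‖) := mul_le_mul_of_nonneg_left hgeom hφ'
    _ = deriv φ ‖a‖ / ‖a + w‖ * ‖w‖ ^ 2 := by ring

theorem deriv_div_norm_add_le_iSup_Icc {a w : E} (hφ : Continuous (deriv φ))
    (hanti : AntitoneOn (deriv φ) (Ici 0)) (hφ' : 0 ≤ deriv φ ‖a‖) (h : ‖w‖ < ‖a‖) :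
    deriv φ ‖a‖ / ‖a + w‖
      ≤ ⨆ s : Icc (-1 : ℝ) 1, deriv φ ‖a + (s : ℝ) • w‖ / ‖a + (s : ℝ) • w‖ := by
  set F := fun s : Icc (-1 : ℝ) 1 => deriv φ ‖a + (s : ℝ) • w‖ / ‖a + (s : ℝ) • w‖
  have hnorm : Continuous fun s : Icc (-1 : ℝ) 1 => ‖a + (s : ℝ) • w‖ := by fun_prop
  have hF : Continuous F := (hφ.comp hnorm).div hnorm
    fun s => (norm_add_smul_pos (abs_le.2 s.2) h).ne'
  have hbdd : BddAbove (range F) := (isCompact_range hF).bddAbove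
  have hpos : 0 < ‖a + w‖ := by simpa using norm_add_smul_pos (s := 1) (by simp) h
  rcases le_total ‖a‖ ‖a + w‖ with hle | hle
  · calc deriv φ ‖a‖ / ‖a + w‖ ≤ deriv φ ‖a‖ / ‖a‖ := by gcongr; exact (norm_nonneg w).trans_lt h
      _ = F ⟨0, by norm_num⟩ := by simp [F]
      _ ≤ ⨆ s, F s := le_ciSup hbdd _
  · calc deriv φ ‖a‖ / ‖a + w‖ ≤ deriv φ ‖a + w‖ / ‖a + w‖ := by
          gcongr; exact hanti (norm_nonneg _) (norm_nonneg _) hle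
      _ = F ⟨1, by norm_num⟩ := by simp [F]
      _ ≤ ⨆ s, F s := le_ciSup hbdd _

end NormProfile

theorem sub_le_norm_profile_increment_of_max {E : Type*} [NormedAddCommGroup E]
    [InnerProductSpace ℝ E] {u v : E → ℝ} {φ : ℝ → ℝ} {xb yb : E}
    (hmax : ∀ x y, u x - v y - φ ‖x - y‖ ≤ u xb - v yb - φ ‖xb - yb‖) (p jx jy : E) :
    (u (xb + jx) - u xb - ⟪p, jx⟫) - (v (yb + jy) - v yb - ⟪p, jy⟫)
      ≤ φ ‖xb - yb + (jx - jy)‖ - φ ‖xb - yb‖ - ⟪p, jx - jy⟫ := by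
  have h := hmax (xb + jx) (yb + jy)
  rw [show xb + jx - (yb + jy) = xb - yb + (jx - jy) by abel] at h
  rw [inner_sub_right]
  linarith
theorem outside_cone_estimate_levy_ito_general {d : ℕ}
    (u v : EuclideanSpace ℝ (Fin d) → ℝ)
    (φ : ℝ → ℝ) (hφ : ContDiff ℝ 2 φ)
    (hφ' : ∀ t : ℝ, 0 ≤ t → 0 ≤ deriv φ t)
    (hφ'' : ∀ t : ℝ, 0 ≤ t → deriv (deriv φ) t ≤ 0)
    (xb yb : EuclideanSpace ℝ (Fin d))
    (hmax : ∀ x y, u x - v y - φ ‖x - y‖ ≤ u xb - v yb - φ ‖xb - yb‖)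
    (a : EuclideanSpace ℝ (Fin d)) (ha : a = xb - yb)
    (p : EuclideanSpace ℝ (Fin d)) (hp : p = deriv φ ‖a‖ • (‖a‖⁻¹ • a))
    (j : EuclideanSpace ℝ (Fin d) → EuclideanSpace ℝ (Fin d) → EuclideanSpace ℝ (Fin d))
    (hj : Measurable (Function.uncurry j))
    (Δ : EuclideanSpace ℝ (Fin d) → EuclideanSpace ℝ (Fin d))
    (hΔ : ∀ z, Δ z = j xb z - j yb z)
    (Cone : Set (EuclideanSpace ℝ (Fin d))) (hConem : MeasurableSet Cone)
    (δ : ℝ) (hδa : δ < ‖a‖)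
    (μ : Measure (EuclideanSpace ℝ (Fin d)))
    (g : EuclideanSpace ℝ (Fin d) → ℝ)
    (hg : ∀ z, g z = (⨆ s : Icc (-1:ℝ) 1,
        deriv φ ‖a + (s : ℝ) • Δ z‖ / ‖a + (s : ℝ) • Δ z‖) * ‖Δ z‖ ^ 2)
    (hint1 : IntegrableOn (fun z => u (xb + j xb z) - u xb - ⟪p, j xb z⟫)
      (Metric.closedBall 0 1 \ Cone) μ)
    (hint2 : IntegrableOn (fun z => v (yb + j yb z) - v yb - ⟪p, j yb z⟫)
      (Metric.closedBall 0 1 \ Cone) μ)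
    (hint3 : IntegrableOn (fun z => ‖Δ z‖)
      {z | z ∈ Metric.closedBall 0 1 \ Cone ∧ δ ≤ ‖Δ z‖} μ)
    (hint4 : IntegrableOn g {z | z ∈ Metric.closedBall 0 1 \ Cone ∧ ‖Δ z‖ ≤ δ} μ) :
    (∫ z in Metric.closedBall 0 1 \ Cone,
        (u (xb + j xb z) - u xb - ⟪p, j xb z⟫) ∂μ)
      - ∫ z in Metric.closedBall 0 1 \ Cone,
          (v (yb + j yb z) - v yb - ⟪p, j yb z⟫) ∂μ
    ≤ 2 * deriv φ ‖a‖
          * ∫ z in {z | z ∈ Metric.closedBall 0 1 \ Cone ∧ δ ≤ ‖Δ z‖}, ‖Δ z‖ ∂μ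
      + ∫ z in {z | z ∈ Metric.closedBall 0 1 \ Cone ∧ ‖Δ z‖ ≤ δ}, g z ∂μ := by
  have hconc := hφ.concaveOn_Ici_zero hφ''
  have hφd : Differentiable ℝ φ := hφ.differentiable two_ne_zero
  have hc : 0 ≤ deriv φ ‖a‖ := hφ' _ (norm_nonneg a)
  have hΔm : Measurable Δ := by
    rw [funext hΔ]
    exact (hj.comp (measurable_const.prodMk measurable_id)).sub
      (hj.comp (measurable_const.prodMk measurable_id))
  set S := Metric.closedBall (0 : EuclideanSpace ℝ (Fin d)) 1 \ Cone
  have hS : MeasurableSet S := measurableSet_closedBall.diff hConem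
  have hsmall : ∀ z ∈ S \ {z | z ∈ S ∧ δ ≤ ‖Δ z‖}, ‖Δ z‖ < δ :=
    fun z hz => not_le.1 fun h => hz.2 ⟨hz.1, h⟩
  have hK : ∀ z, (u (xb + j xb z) - u xb - ⟪p, j xb z⟫) - (v (yb + j yb z) - v yb - ⟪p, j yb z⟫)
      ≤ φ ‖a + Δ z‖ - φ ‖a‖ - ⟪p, Δ z⟫ := fun z => by
    rw [hΔ, ha]; exact sub_le_norm_profile_increment_of_max hmax p _ _
  have hg_nonneg : ∀ z, 0 ≤ g z := fun z => (hg z).symm ▸ mul_nonneg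
    (Real.iSup_nonneg fun s => div_nonneg (hφ' _ (norm_nonneg _)) (norm_nonneg _)) (sq_nonneg _)
  rw [← integral_sub hint1 hint2, ← integral_const_mul]
  refine setIntegral_le_setIntegral_add_setIntegral hS
    (hS.inter (measurableSet_le measurable_const hΔm.norm)) (fun z hz => hz.1)
    (fun z hz => ⟨hz.1, (hsmall z hz).le⟩) (hint1.sub hint2) (hint3.const_mul _) hint4 hg_nonneg
    (fun z _ => (hK z).trans ?_) (fun z hz => (hK z).trans ?_)
  · rw [hp]
    exact norm_profile_remainder_le_two_mul hconc (hφd _) hc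
  · have hlt : ‖Δ z‖ < ‖a‖ := (hsmall z hz).trans hδa
    rw [hp, hg]
    calc _ ≤ deriv φ ‖a‖ / ‖a + Δ z‖ * ‖Δ z‖ ^ 2 :=
          norm_profile_remainder_le_div_mul_sq hconc (hφd _) hc hlt
      _ ≤ _ := by
          gcongr
          exact deriv_div_norm_add_le_iSup_Icc (hφ.continuous_deriv one_le_two)
            (hconc.antitoneOn_deriv fun t _ => hφd t) hc hlt

/-- **Estimate outside the cone for Lévy–Itô operators (Lemma est_LI3).**
In the maximum setup, with `Δ(z) = j(x̄,z) − j(ȳ,z)` and `0 < δ < ‖a‖`, the difference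
of the Lévy–Itô nonlocal terms over `B \ 𝒞` is bounded by
`2φ'(‖a‖)∫_{‖Δ‖≥δ} ‖Δ(z)‖ dμ + ∫_{‖Δ‖≤δ} sup_{|s|≤1}(φ'(‖a+sΔ(z)‖)/‖a+sΔ(z)‖)‖Δ(z)‖² dμ`. -/
theorem outside_cone_estimate_levy_ito {d : ℕ}
    (u v : EuclideanSpace ℝ (Fin d) → ℝ)
    (hum : Measurable u) (hvm : Measurable v)
    (hub : ∃ C, ∀ x, |u x| ≤ C) (hvb : ∃ C, ∀ x, |v x| ≤ C)
    (φ : ℝ → ℝ) (hφ : ContDiff ℝ 2 φ)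
    (hφ' : ∀ t : ℝ, 0 ≤ t → 0 ≤ deriv φ t)
    (hφ'' : ∀ t : ℝ, 0 ≤ t → deriv (deriv φ) t ≤ 0)
    (xb yb : EuclideanSpace ℝ (Fin d)) (hxy : xb ≠ yb)
    (hmax : ∀ x y, u x - v y - φ ‖x - y‖ ≤ u xb - v yb - φ ‖xb - yb‖)
    (a : EuclideanSpace ℝ (Fin d)) (ha : a = xb - yb)
    (p : EuclideanSpace ℝ (Fin d)) (hp : p = deriv φ ‖a‖ • (‖a‖⁻¹ • a))
    (j : EuclideanSpace ℝ (Fin d) → EuclideanSpace ℝ (Fin d) → EuclideanSpace ℝ (Fin d))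
    (hj : Measurable (Function.uncurry j))
    (Δ : EuclideanSpace ℝ (Fin d) → EuclideanSpace ℝ (Fin d))
    (hΔ : ∀ z, Δ z = j xb z - j yb z)
    (Cone : Set (EuclideanSpace ℝ (Fin d))) (hConem : MeasurableSet Cone)
    (δ : ℝ) (hδ0 : 0 < δ) (hδa : δ < ‖a‖)
    (μ : Measure (EuclideanSpace ℝ (Fin d)))
    (g : EuclideanSpace ℝ (Fin d) → ℝ)
    (hg : ∀ z, g z = (⨆ s : Icc (-1:ℝ) 1,
        deriv φ ‖a + (s : ℝ) • Δ z‖ / ‖a + (s : ℝ) • Δ z‖) * ‖Δ z‖ ^ 2)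
    (hint1 : IntegrableOn (fun z => u (xb + j xb z) - u xb - ⟪p, j xb z⟫)
      (Metric.closedBall 0 1 \ Cone) μ)
    (hint2 : IntegrableOn (fun z => v (yb + j yb z) - v yb - ⟪p, j yb z⟫)
      (Metric.closedBall 0 1 \ Cone) μ)
    (hint3 : IntegrableOn (fun z => ‖Δ z‖)
      {z | z ∈ Metric.closedBall 0 1 \ Cone ∧ δ ≤ ‖Δ z‖} μ)
    (hint4 : IntegrableOn g {z | z ∈ Metric.closedBall 0 1 \ Cone ∧ ‖Δ z‖ ≤ δ} μ) :
    (∫ z in Metric.closedBall 0 1 \ Cone,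
        (u (xb + j xb z) - u xb - ⟪p, j xb z⟫) ∂μ)
      - ∫ z in Metric.closedBall 0 1 \ Cone,
          (v (yb + j yb z) - v yb - ⟪p, j yb z⟫) ∂μ
    ≤ 2 * deriv φ ‖a‖
          * ∫ z in {z | z ∈ Metric.closedBall 0 1 \ Cone ∧ δ ≤ ‖Δ z‖}, ‖Δ z‖ ∂μ
      + ∫ z in {z | z ∈ Metric.closedBall 0 1 \ Cone ∧ ‖Δ z‖ ≤ δ}, g z ∂μ :=
  outside_cone_estimate_levy_ito_general u v φ hφ hφ' hφ'' xb yb hmax a ha p hp j hj Δ hΔ Cone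
    hConem δ hδa μ g hg hint1 hint2 hint3 hint4
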